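/- arXiv:2303.12460 — 9 statements merged into one kernel-verified Lean document; each statement's English description precedes it below -/
import Mathlib

section
/- (Theorem 2) Let V be a finite type of users and T a nonempty finite index set of tasks. For each task j ∈ T, suppose given: a claim set A_j ⊆ V; a finite set G_j of realizations, where each realization g ∈ G_j is a binary relation r_{j,g} on V with weight p_{j,g} ≥ 0; and node qualities q_j : V → ℝ with q_j(v) ≥ 0 for all v. Define the Multi-Task Diffusion Function f : Finset V → ℝ by f(S) = (1/|T|) · Σ_{j ∈ T} Σ_{g ∈ G_j} p_{j,g} · Σ_{v ∈ V} q_j(v) · 𝟙[∃ u ∈ S ∩ A_j such that v is reachable from u under r_{j,g}]. Then f is monotone and submodular. -/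
open Classical

/-- Theorem 2: the Multi-Task Diffusion Function
`f S = (1/|T|) Σ_{j∈T} Σ_{g∈G_j} p_{j,g} Σ_{v∈V} q_j(v) ·
  𝟙[∃ u ∈ S ∩ A_j, v reachable from u under r_{j,g}]`
is monotone and submodular. -/
theorem stmt4 {V : Type*} [Fintype V] [DecidableEq V]
    {τ : Type*} {γ : Type*} (T : Finset τ) (hT : T.Nonempty)
    (A : τ → Finset V) (G : τ → Finset γ)
    (r : τ → γ → V → V → Prop) (p : τ → γ → ℝ) (q : τ → V → ℝ)
    (hp : ∀ j ∈ T, ∀ g ∈ G j, 0 ≤ p j g)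
    (hq : ∀ j ∈ T, ∀ v : V, 0 ≤ q j v)
    (f : Finset V → ℝ)
    (hf : ∀ S : Finset V,
      f S = ((T.card : ℝ))⁻¹ * ∑ j ∈ T, ∑ g ∈ G j, p j g *
        ∑ v : V, q j v *
          (if ∃ u ∈ S ∩ A j, Relation.ReflTransGen (r j g) u v
           then (1 : ℝ) else 0)) :
    (∀ S₁ S₂ : Finset V, S₁ ⊆ S₂ → f S₁ ≤ f S₂) ∧
    (∀ S₁ S₂ : Finset V, S₁ ⊆ S₂ → ∀ v ∉ S₂,
      f (insert v S₁) - f S₁ ≥ f (insert v S₂) - f S₂) := by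
  have hcinv : (0:ℝ) ≤ ((T.card : ℝ))⁻¹ := by positivity
  constructor
  · intro S₁ S₂ hsub
    rw [hf, hf]
    apply mul_le_mul_of_nonneg_left _ hcinv
    apply Finset.sum_le_sum; intro j hj
    apply Finset.sum_le_sum; intro g hg
    apply mul_le_mul_of_nonneg_left _ (hp j hj g hg)
    apply Finset.sum_le_sum; intro w _
    apply mul_le_mul_of_nonneg_left _ (hq j hj w)
    have mono : (∃ u ∈ S₁ ∩ A j, Relation.ReflTransGen (r j g) u w) →
        (∃ u ∈ S₂ ∩ A j, Relation.ReflTransGen (r j g) u w) := by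
      rintro ⟨u, hu, hr⟩
      exact ⟨u, Finset.mem_inter.mpr ⟨hsub (Finset.mem_inter.mp hu).1,
        (Finset.mem_inter.mp hu).2⟩, hr⟩
    by_cases h : ∃ u ∈ S₁ ∩ A j, Relation.ReflTransGen (r j g) u w
    · rw [if_pos h, if_pos (mono h)]
    · rw [if_neg h]
      split_ifs <;> norm_num
  · intro S₁ S₂ hsub v hv
    rw [ge_iff_le, hf, hf, hf, hf, ← mul_sub, ← mul_sub,
      ← Finset.sum_sub_distrib, ← Finset.sum_sub_distrib]
    apply mul_le_mul_of_nonneg_left _ hcinv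
    apply Finset.sum_le_sum; intro j hj
    rw [← Finset.sum_sub_distrib, ← Finset.sum_sub_distrib]
    apply Finset.sum_le_sum; intro g hg
    rw [← mul_sub, ← mul_sub]
    apply mul_le_mul_of_nonneg_left _ (hp j hj g hg)
    rw [← Finset.sum_sub_distrib, ← Finset.sum_sub_distrib]
    apply Finset.sum_le_sum; intro w _
    rw [← mul_sub, ← mul_sub]
    apply mul_le_mul_of_nonneg_left _ (hq j hj w)
    have key : ∀ S : Finset V,
        (∃ u ∈ insert v S ∩ A j, Relation.ReflTransGen (r j g) u w) ↔
        ((v ∈ A j ∧ Relation.ReflTransGen (r j g) v w) ∨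
          ∃ u ∈ S ∩ A j, Relation.ReflTransGen (r j g) u w) := by
      intro S
      constructor
      · rintro ⟨u, hu, hr⟩
        rcases Finset.mem_insert.mp (Finset.mem_inter.mp hu).1 with h | h
        · exact Or.inl ⟨h ▸ (Finset.mem_inter.mp hu).2, h ▸ hr⟩
        · exact Or.inr ⟨u, Finset.mem_inter.mpr ⟨h, (Finset.mem_inter.mp hu).2⟩, hr⟩
      · rintro (⟨hA, hr⟩ | ⟨u, hu, hr⟩)
        · exact ⟨v, Finset.mem_inter.mpr ⟨Finset.mem_insert_self v S, hA⟩, hr⟩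
        · exact ⟨u, Finset.mem_inter.mpr ⟨Finset.mem_insert_of_mem
            (Finset.mem_inter.mp hu).1, (Finset.mem_inter.mp hu).2⟩, hr⟩
    have mono : (∃ u ∈ S₁ ∩ A j, Relation.ReflTransGen (r j g) u w) →
        (∃ u ∈ S₂ ∩ A j, Relation.ReflTransGen (r j g) u w) := by
      rintro ⟨u, hu, hr⟩
      exact ⟨u, Finset.mem_inter.mpr ⟨hsub (Finset.mem_inter.mp hu).1,
        (Finset.mem_inter.mp hu).2⟩, hr⟩
    rw [if_congr (key S₁) rfl rfl, if_congr (key S₂) rfl rfl]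
    by_cases ha : ∃ u ∈ S₁ ∩ A j, Relation.ReflTransGen (r j g) u w
    · have hb := mono ha
      rw [if_pos (Or.inr hb), if_pos hb, if_pos (Or.inr ha), if_pos ha]
    · by_cases hc : v ∈ A j ∧ Relation.ReflTransGen (r j g) v w
      · rw [if_pos (Or.inl hc), if_pos (Or.inl hc), if_neg ha]
        split_ifs <;> norm_num
      · by_cases hb : ∃ u ∈ S₂ ∩ A j, Relation.ReflTransGen (r j g) u w
        · rw [if_pos (Or.inr hb), if_pos hb, if_neg (fun h => h.elim hc ha),
            if_neg ha]
          norm_num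
        · rw [if_neg (fun h => h.elim hc hb), if_neg hb,
            if_neg (fun h => h.elim hc ha), if_neg ha]
end

section
/- (Lemma 5) Let V be a finite type, q : V → ℝ with q(v) ≥ 0 for all v and Q := Σ_{v ∈ V} q(v) > 0, and let G be a finite set of realizations, each g ∈ G being a binary relation r_g on V, with weights p_g ≥ 0 satisfying Σ_{g ∈ G} p_g = 1. Define f(S) = Σ_{g ∈ G} p_g · Σ_{v ∈ V} q(v) · 𝟙[∃ u ∈ S such that v is reachable from u under r_g], and for u ∈ V and g ∈ G define the reverse reachable set R_g(u) = {w ∈ V : u is reachable from w under r_g}. Then for every S ⊆ V: f(S) = Q · Σ_{u ∈ V} Σ_{g ∈ G} (q(u)/Q) · p_g · 𝟙[S ∩ R_g(u) ≠ ∅]. -/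
open Classical

/-- Lemma 5: the single-task quality-weighted diffusion value
equals `Q` times the expected indicator that `S` intersects a random
reverse reachable set (root `u` chosen with probability `q u / Q`,
realization `g` chosen with probability `p g`). -/
theorem stmt5 {V : Type*} [Fintype V] {γ : Type*}
    (q : V → ℝ) (hq : ∀ v, 0 ≤ q v)
    (Q : ℝ) (hQ : Q = ∑ v : V, q v) (hQpos : 0 < Q)
    (G : Finset γ) (r : γ → V → V → Prop) (p : γ → ℝ)
    (hp : ∀ g ∈ G, 0 ≤ p g) (hpsum : ∑ g ∈ G, p g = 1)
    (f : Finset V → ℝ)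
    (hf : ∀ S : Finset V,
      f S = ∑ g ∈ G, p g * ∑ v : V, q v *
        (if ∃ u ∈ S, Relation.ReflTransGen (r g) u v then (1 : ℝ) else 0)) :
    ∀ S : Finset V,
      f S = Q * ∑ u : V, ∑ g ∈ G, (q u / Q) * p g *
        (if ∃ s ∈ S, Relation.ReflTransGen (r g) s u then (1 : ℝ) else 0) := by
  intro S
  rw [hf]
  simp only [Finset.mul_sum]
  rw [Finset.sum_comm]
  refine Finset.sum_congr rfl fun v _ => ?_
  refine Finset.sum_congr rfl fun g _ => ?_
  field_simp
end

section
/- (Theorem 3) Let V be a finite type of users and T a nonempty finite index set of tasks. For each task j ∈ T suppose given: a claim set A_j ⊆ V; a finite set G_j of realizations, each g ∈ G_j a binary relation r_{j,g} on V, with weights p_{j,g} ≥ 0 satisfying Σ_{g ∈ G_j} p_{j,g} = 1; and node qualities q_j : V → ℝ with q_j(v) ≥ 0 and Q_j := Σ_{v ∈ V} q_j(v) > 0. Let f(S) = (1/|T|) · Σ_{j ∈ T} Σ_{g ∈ G_j} p_{j,g} · Σ_{v ∈ V} q_j(v) · 𝟙[∃ u ∈ S ∩ A_j such that v is reachable from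 u under r_{j,g}], and define the reverse reachable set R_{j,g}(u) = {w ∈ V : u is reachable from w under r_{j,g}}. Then for every S ⊆ V: f(S) = Σ_{j ∈ T} Σ_{v ∈ V} q_j(v) · ē_j(S), where ē_j(S) := (1/|T|) · Σ_{u ∈ V} (q_j(u)/Q_j) · Σ_{g ∈ G_j} p_{j,g} · 𝟙[(S ∩ A_j) ∩ R_{j,g}(u) ≠ ∅]. -/
open Classical

/-- Theorem 3: the Multi-Task Diffusion Function equals
`Σ_{j∈T} Σ_{v∈V} q_j(v) · ē_j(S)`, where `ē_j(S)` is the expectation over a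
random multi-task reverse reachable set (task `X` uniform on `T`, root `u`
with probability `q_X(u)/Q_X`, realization `g` with probability `p_{X,g}`)
of the indicator that `X = j` and `S ∩ A_j` intersects the RR set. -/
theorem stmt6 {V : Type*} [Fintype V] [DecidableEq V]
    {τ : Type*} {γ : Type*} (T : Finset τ) (hT : T.Nonempty)
    (A : τ → Finset V) (G : τ → Finset γ)
    (r : τ → γ → V → V → Prop) (p : τ → γ → ℝ) (q : τ → V → ℝ)
    (hp : ∀ j ∈ T, ∀ g ∈ G j, 0 ≤ p j g)
    (hpsum : ∀ j ∈ T, ∑ g ∈ G j, p j g = 1)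
    (hq : ∀ j ∈ T, ∀ v : V, 0 ≤ q j v)
    (hQpos : ∀ j ∈ T, 0 < ∑ v : V, q j v)
    (f : Finset V → ℝ)
    (hf : ∀ S : Finset V,
      f S = ((T.card : ℝ))⁻¹ * ∑ j ∈ T, ∑ g ∈ G j, p j g *
        ∑ v : V, q j v *
          (if ∃ u ∈ S ∩ A j, Relation.ReflTransGen (r j g) u v
           then (1 : ℝ) else 0)) :
    ∀ S : Finset V,
      f S = ∑ j ∈ T, ∑ v : V, q j v *
        (((T.card : ℝ))⁻¹ * ∑ u : V, (q j u / ∑ w : V, q j w) *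
          ∑ g ∈ G j, p j g *
            (if ∃ s ∈ S ∩ A j, Relation.ReflTransGen (r j g) s u
             then (1 : ℝ) else 0)) := by
  intro S
  rw [hf S, Finset.mul_sum]
  refine Finset.sum_congr rfl fun j hj => ?_
  have hQ : (∑ w : V, q j w) ≠ 0 := (hQpos j hj).ne'
  set Y : V → ℝ := fun u => ∑ g ∈ G j, p j g *
      (if ∃ s ∈ S ∩ A j, Relation.ReflTransGen (r j g) s u then (1 : ℝ) else 0) with hY
  have key : ∑ v : V, q j v * (((T.card : ℝ))⁻¹ *
      ∑ u : V, (q j u / ∑ w : V, q j w) * Y u)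
      = ((T.card : ℝ))⁻¹ * ∑ u : V, q j u * Y u := by
    rw [← Finset.sum_mul]
    have h2 : ∀ u : V, (q j u / ∑ w : V, q j w) * Y u
        = q j u * Y u / (∑ w : V, q j w) := fun u => by ring
    simp_rw [h2]
    rw [← Finset.sum_div]
    field_simp
  rw [key, hY]
  congr 1
  simp_rw [Finset.mul_sum]
  rw [Finset.sum_comm]
  exact Finset.sum_congr rfl fun u _ => Finset.sum_congr rfl fun g _ => by ring
end

section
/- (Per-step greedy lemma) Let V be a finite type, f : Finset V → ℝ a monotone and submodular set function, c : V → ℝ with c(v) > 0 for all v, and B > 0 a budget. Let S ⊆ V be any set and T ⊆ V satisfy Σ_{t ∈ T} c(t) ≤ B. Suppose v* ∈ V \ S maximizes the marginal gain per unit cost, i.e. (f(S ∪ {v*}) − f(S))/c(v*) ≥ (f(S ∪ {v}) − f(S))/c(v) for every v ∈ V \ S. Then f(S ∪ {v*}) − f(S) ≥ (c(v*)/B) · (f(T) − f(S)). -/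
lemma aux10 {V : Type*} [DecidableEq V]
    (f : Finset V → ℝ)
    (hmono : ∀ A B : Finset V, A ⊆ B → f A ≤ f B)
    (hsub : ∀ A B : Finset V, A ⊆ B → ∀ v ∉ B,
      f (insert v A) - f A ≥ f (insert v B) - f B)
    (S : Finset V) :
    ∀ A : Finset V, f (S ∪ A) - f S ≤ ∑ t ∈ A, (f (insert t S) - f S) := by
  intro A
  induction A using Finset.induction_on with
  | empty => simp
  | @insert a A ha ih =>
    rw [Finset.sum_insert ha, Finset.union_insert]
    by_cases h : a ∈ S ∪ A
    · rw [Finset.insert_eq_self.mpr h]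
      have h0 : 0 ≤ f (insert a S) - f S :=
        sub_nonneg.mpr (hmono _ _ (Finset.subset_insert a S))
      linarith
    · have h1 := hsub S (S ∪ A) Finset.subset_union_left a h
      linarith

/-- per-step greedy lemma: if `v*` maximizes the marginal gain
per unit cost over `V \ S`, then
`f (S ∪ {v*}) − f S ≥ (c v* / B) · (f T − f S)` for every budget-feasible `T`. -/
theorem stmt10 {V : Type*} [Fintype V] [DecidableEq V]
    (f : Finset V → ℝ)
    (hmono : ∀ A B : Finset V, A ⊆ B → f A ≤ f B)
    (hsub : ∀ A B : Finset V, A ⊆ B → ∀ v ∉ B,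
      f (insert v A) - f A ≥ f (insert v B) - f B)
    (c : V → ℝ) (hc : ∀ v, 0 < c v) (B : ℝ) (hB : 0 < B)
    (S T : Finset V) (hT : ∑ t ∈ T, c t ≤ B)
    (vstar : V) (hvstar : vstar ∉ S)
    (hmax : ∀ v : V, v ∉ S →
      (f (insert v S) - f S) / c v ≤ (f (insert vstar S) - f S) / c vstar) :
    f (insert vstar S) - f S ≥ (c vstar / B) * (f T - f S) := by
  set δ := f (insert vstar S) - f S with hδ
  set θ := δ / c vstar with hθ
  have hδ0 : 0 ≤ δ := sub_nonneg.mpr (hmono _ _ (Finset.subset_insert _ S))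
  have hθ0 : 0 ≤ θ := div_nonneg hδ0 (hc vstar).le
  -- each single-element gain bounded by θ * c t
  have hgain : ∀ t : V, f (insert t S) - f S ≤ θ * c t := by
    intro t
    by_cases htS : t ∈ S
    · rw [Finset.insert_eq_self.mpr htS]
      simp only [sub_self]
      exact mul_nonneg hθ0 (hc t).le
    · have := hmax t htS
      rw [div_le_div_iff₀ (hc t) (hc vstar)] at this
      rw [hθ, div_mul_eq_mul_div, le_div_iff₀ (hc vstar)]
      linarith
  have h1 : f T - f S ≤ θ * B := by
    have h2 : f T ≤ f (S ∪ T) := hmono _ _ Finset.subset_union_right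
    have h3 := aux10 f hmono hsub S T
    have h4 : ∑ t ∈ T, (f (insert t S) - f S) ≤ ∑ t ∈ T, θ * c t :=
      Finset.sum_le_sum fun t _ => hgain t
    have h5 : ∑ t ∈ T, θ * c t = θ * ∑ t ∈ T, c t := by rw [Finset.mul_sum]
    have h6 : θ * ∑ t ∈ T, c t ≤ θ * B := mul_le_mul_of_nonneg_left hT hθ0
    linarith
  have h7 : c vstar / B * (f T - f S) ≤ c vstar / B * (θ * B) :=
    mul_le_mul_of_nonneg_left h1 (div_nonneg (hc vstar).le hB.le)
  have h8 : c vstar / B * (θ * B) = δ := by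
    have hcne : c vstar ≠ 0 := (hc vstar).ne'
    have hBne : B ≠ 0 := hB.ne'
    rw [hθ]
    field_simp
  linarith
end

section
/- (Iterated greedy bound) Let V be a finite type, f : Finset V → ℝ a monotone and submodular set function with f(∅) = 0, c : V → ℝ with 0 < c(v) ≤ B for all v, and B > 0 a budget. Let v_1, …, v_l be distinct elements of V, set S_0 = ∅ and S_i = {v_1, …, v_i}, and suppose that for each 0 ≤ i < l the element v_{i+1} maximizes the ratio (f(S_i ∪ {v}) − f(S_i))/c(v) over all v ∈ V \ S_i. Then for every T ⊆ V with Σ_{t ∈ T} c(t) ≤ B: f(S_l) ≥ (1 − Π_{i=1}^{l} (1 − c(v_i)/B)) · f(T). -/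
lemma submod_sum {V : Type*} [DecidableEq V]
    (f : Finset V → ℝ)
    (hsub : ∀ A B : Finset V, A ⊆ B → ∀ v ∉ B,
      f (insert v A) - f A ≥ f (insert v B) - f B) :
    ∀ (T A : Finset V), f (A ∪ T) - f A ≤ ∑ t ∈ T \ A, (f (insert t A) - f A) := by
  intro T
  induction T using Finset.induction_on with
  | empty => simp
  | @insert t T ht ih =>
    intro A
    by_cases htA : t ∈ A
    · have h1 : A ∪ insert t T = A ∪ T := by
        rw [Finset.union_insert, Finset.insert_eq_self.mpr (Finset.mem_union_left T htA)]
      have h2 : insert t T \ A = T \ A := Finset.insert_sdiff_of_mem T htA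
      rw [h1, h2]; exact ih A
    · have h2 : insert t T \ A = insert t (T \ A) :=
        Finset.insert_sdiff_of_notMem T htA
      rw [h2, Finset.sum_insert (by simp [ht])]
      rw [Finset.union_insert]
      have htAT : t ∉ A ∪ T := by simp [ht, htA]
      have h3 := hsub A (A ∪ T) Finset.subset_union_left t htAT
      have h4 := ih A
      linarith

/-- iterated greedy bound: for the cost-effective greedy chain
`S_0 = ∅`, `S_i = {v_1, …, v_i}`, where each `v_{i+1}` maximizes marginal gain
per unit cost over `V \ S_i`, and for every `T` with `Σ_{t∈T} c t ≤ B`: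
`f (S_l) ≥ (1 − Π_{i=1}^{l} (1 − c(v_i)/B)) · f T`. -/
theorem stmt11 {V : Type*} [Fintype V] [DecidableEq V]
    (f : Finset V → ℝ)
    (hmono : ∀ A B : Finset V, A ⊆ B → f A ≤ f B)
    (hsub : ∀ A B : Finset V, A ⊆ B → ∀ v ∉ B,
      f (insert v A) - f A ≥ f (insert v B) - f B)
    (hf0 : f ∅ = 0)
    (B : ℝ) (hB : 0 < B)
    (c : V → ℝ) (hc : ∀ v, 0 < c v ∧ c v ≤ B)
    (l : ℕ) (v : ℕ → V)
    (hdist : Set.InjOn v (Set.Icc 1 l))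
    (S : ℕ → Finset V) (hS0 : S 0 = ∅)
    (hSsucc : ∀ i < l, S (i + 1) = insert (v (i + 1)) (S i))
    (hnotmem : ∀ i < l, v (i + 1) ∉ S i)
    (hgreedy : ∀ i < l, ∀ u : V, u ∉ S i →
      (f (insert u (S i)) - f (S i)) / c u ≤
      (f (insert (v (i + 1)) (S i)) - f (S i)) / c (v (i + 1))) :
    ∀ T : Finset V, (∑ t ∈ T, c t) ≤ B →
      f (S l) ≥ (1 - ∏ i ∈ Finset.Icc 1 l, (1 - c (v i) / B)) * f T := by
  intro T hT
  have hfT : 0 ≤ f T := by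
    have := hmono ∅ T (Finset.empty_subset T); linarith
  -- per-step bound
  have step : ∀ i < l,
      (c (v (i + 1)) / B) * (f T - f (S i)) ≤ f (S (i + 1)) - f (S i) := by
    intro i hi
    set A := S i
    set w := v (i + 1)
    have hcw := hc w
    have hr0 : 0 ≤ (f (insert w A) - f A) / c w := by
      have := hmono A (insert w A) (Finset.subset_insert w A)
      exact div_nonneg (by linarith) hcw.1.le
    set r := (f (insert w A) - f A) / c w with hrdef
    have key : f T - f A ≤ B * r := by
      have h1 : f T ≤ f (A ∪ T) := hmono T (A ∪ T) Finset.subset_union_right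
      have h2 := submod_sum f hsub T A
      have h3 : ∑ t ∈ T \ A, (f (insert t A) - f A) ≤ ∑ t ∈ T \ A, c t * r := by
        apply Finset.sum_le_sum
        intro t htm
        have htA : t ∉ A := (Finset.mem_sdiff.mp htm).2
        have hg := hgreedy i hi t htA
        have hct := (hc t).1
        calc f (insert t A) - f A
            = (f (insert t A) - f A) / c t * c t := by field_simp
          _ ≤ r * c t := by
              apply mul_le_mul_of_nonneg_right hg hct.le
          _ = c t * r := mul_comm _ _
      have h4 : ∑ t ∈ T \ A, c t * r ≤ B * r := by
        rw [← Finset.sum_mul]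
        apply mul_le_mul_of_nonneg_right _ hr0
        calc ∑ t ∈ T \ A, c t ≤ ∑ t ∈ T, c t := by
              apply Finset.sum_le_sum_of_subset_of_nonneg (Finset.sdiff_subset)
              intro t _ _; exact (hc t).1.le
          _ ≤ B := hT
      linarith
    have hSeq : S (i + 1) = insert w A := hSsucc i hi
    rw [hSeq, hrdef] at *
    have : (c w / B) * (f T - f A) ≤ (c w / B) * (B * ((f (insert w A) - f A) / c w)) :=
      mul_le_mul_of_nonneg_left key (div_nonneg hcw.1.le hB.le)
    have heq : (c w / B) * (B * ((f (insert w A) - f A) / c w)) = f (insert w A) - f A := by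
      field_simp [hcw.1.ne', hB.ne']
    linarith [this, heq ▸ this]
  -- induction
  have main : ∀ k ≤ l, f T - f (S k) ≤ (∏ i ∈ Finset.Icc 1 k, (1 - c (v i) / B)) * f T := by
    intro k
    induction k with
    | zero => intro _; simp [hS0, hf0]
    | succ k ih =>
      intro hk
      have hkl : k < l := hk
      have ih' := ih (Nat.le_of_succ_le hk)
      have hstep := step k hkl
      have hfac : 0 ≤ 1 - c (v (k + 1)) / B := by
        have := (hc (v (k + 1))).2
        have : c (v (k + 1)) / B ≤ 1 := (div_le_one hB).mpr this
        linarith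
      have hprod : (∏ i ∈ Finset.Icc 1 (k + 1), (1 - c (v i) / B)) =
          (∏ i ∈ Finset.Icc 1 k, (1 - c (v i) / B)) * (1 - c (v (k + 1)) / B) := by
        rw [Finset.prod_Icc_succ_top (Nat.le_add_left 1 k)]
      have h5 : f T - f (S (k + 1)) ≤ (1 - c (v (k + 1)) / B) * (f T - f (S k)) := by
        have hexp : (1 - c (v (k + 1)) / B) * (f T - f (S k)) =
            (f T - f (S k)) - (c (v (k + 1)) / B) * (f T - f (S k)) := by ring
        linarith
      calc f T - f (S (k + 1)) ≤ (1 - c (v (k + 1)) / B) * (f T - f (S k)) := h5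
        _ ≤ (1 - c (v (k + 1)) / B) * ((∏ i ∈ Finset.Icc 1 k, (1 - c (v i) / B)) * f T) :=
            mul_le_mul_of_nonneg_left ih' hfac
        _ = (∏ i ∈ Finset.Icc 1 (k + 1), (1 - c (v i) / B)) * f T := by
            rw [hprod]; ring
  have := main l le_rfl
  nlinarith [this]
end

section
/- Let V be a finite type, f : Finset V → ℝ a monotone and submodular set function with f(∅) = 0, c : V → ℝ with 0 < c(v) ≤ B for all v, and B > 0 a budget. Let v_1, …, v_l be distinct elements of V, set S_0 = ∅ and S_i = {v_1, …, v_i}, and suppose that for each 0 ≤ i < l the element v_{i+1} maximizes (f(S_i ∪ {v}) − f(S_i))/c(v) over all v ∈ V \ S_i. If in addition Σ_{i=1}^{l} c(v_i) ≥ B, then for every T ⊆ V with Σ_{t ∈ T} c(t) ≤ B: f(S_l) ≥ (1 − 1/e) · f(T). -/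
lemma stmt12_telescope {V : Type*} [DecidableEq V] (f : Finset V → ℝ)
    (hsub : ∀ A B : Finset V, A ⊆ B → ∀ v ∉ B,
      f (insert v A) - f A ≥ f (insert v B) - f B)
    (A : Finset V) (T : Finset V) :
    f (A ∪ T) ≤ f A + ∑ t ∈ T \ A, (f (insert t A) - f A) := by
  induction T using Finset.induction_on with
  | empty => simp
  | @insert x T' hx ih =>
    by_cases hxA : x ∈ A
    · have h1 : A ∪ insert x T' = A ∪ T' := by
        rw [Finset.union_insert, Finset.insert_eq_self.mpr (Finset.mem_union_left _ hxA)]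
      have h2 : insert x T' \ A = T' \ A := by
        ext y; simp only [Finset.mem_sdiff, Finset.mem_insert]
        constructor
        · rintro ⟨h | h, h2⟩
          · exact absurd hxA (h ▸ h2)
          · exact ⟨h, h2⟩
        · rintro ⟨h, h2⟩; exact ⟨Or.inr h, h2⟩
      rw [h1, h2]; exact ih
    · have h1 : A ∪ insert x T' = insert x (A ∪ T') := by
        ext y; simp only [Finset.mem_union, Finset.mem_insert]; tauto
      have h2 : insert x T' \ A = insert x (T' \ A) := by
        ext y; simp only [Finset.mem_sdiff, Finset.mem_insert]
        constructor
        · rintro ⟨h | h, h2⟩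
          · exact Or.inl h
          · exact Or.inr ⟨h, h2⟩
        · rintro (rfl | ⟨h, h2⟩)
          · exact ⟨Or.inl rfl, hxA⟩
          · exact ⟨Or.inr h, h2⟩
      have hxT : x ∉ A ∪ T' := by simp [hx, hxA]
      have hkey := hsub A (A ∪ T') Finset.subset_union_left x hxT
      have hx2 : x ∉ T' \ A := by simp [hx]
      rw [h1, h2, Finset.sum_insert hx2]
      have : f (insert x (A ∪ T')) ≤ f (A ∪ T') + (f (insert x A) - f A) := by
        linarith
      linarith

/-- the cost-effective greedy chain whose cumulative cost reaches
the budget `B` achieves a `(1 − 1/e)` fraction of the value of any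
budget-feasible set `T`. -/
theorem stmt12 {V : Type*} [Fintype V] [DecidableEq V]
    (f : Finset V → ℝ)
    (hmono : ∀ A B : Finset V, A ⊆ B → f A ≤ f B)
    (hsub : ∀ A B : Finset V, A ⊆ B → ∀ v ∉ B,
      f (insert v A) - f A ≥ f (insert v B) - f B)
    (hf0 : f ∅ = 0)
    (B : ℝ) (hB : 0 < B)
    (c : V → ℝ) (hc : ∀ v, 0 < c v ∧ c v ≤ B)
    (l : ℕ) (v : ℕ → V)
    (hdist : Set.InjOn v (Set.Icc 1 l))
    (S : ℕ → Finset V) (hS0 : S 0 = ∅)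
    (hSsucc : ∀ i < l, S (i + 1) = insert (v (i + 1)) (S i))
    (hnotmem : ∀ i < l, v (i + 1) ∉ S i)
    (hgreedy : ∀ i < l, ∀ u : V, u ∉ S i →
      (f (insert u (S i)) - f (S i)) / c u ≤
      (f (insert (v (i + 1)) (S i)) - f (S i)) / c (v (i + 1)))
    (hcost : B ≤ ∑ i ∈ Finset.Icc 1 l, c (v i)) :
    ∀ T : Finset V, (∑ t ∈ T, c t) ≤ B →
      f (S l) ≥ (1 - 1 / Real.exp 1) * f T := by
  intro T hT
  have hfT0 : 0 ≤ f T := by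
    have := hmono ∅ T (Finset.empty_subset T)
    linarith
  -- key invariant
  have key : ∀ i ≤ l, f T - f (S i) ≤
      f T * ∏ j ∈ Finset.Icc 1 i, (1 - c (v j) / B) := by
    intro i
    induction i with
    | zero => intro _; simp [hS0, hf0]
    | succ i ih =>
      intro hil
      have hi : i < l := Nat.lt_of_succ_le hil
      have ihh := ih (le_of_lt hi)
      set A := S i with hA
      have hci : 0 < c (v (i + 1)) := (hc (v (i + 1))).1
      have hciB : c (v (i + 1)) ≤ B := (hc (v (i + 1))).2
      set δ := f (insert (v (i + 1)) A) - f A with hδ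
      have hδ0 : 0 ≤ δ := by
        have := hmono A (insert (v (i + 1)) A) (Finset.subset_insert _ _)
        simp [hδ]; linarith
      -- step: f T - f A ≤ (B / c (v (i+1))) * δ
      have hstep : f T - f A ≤ B * (δ / c (v (i + 1))) := by
        have h1 : f T ≤ f (A ∪ T) := hmono T (A ∪ T) Finset.subset_union_right
        have h2 := stmt12_telescope f hsub A T
        have h3 : ∑ t ∈ T \ A, (f (insert t A) - f A) ≤
            ∑ t ∈ T \ A, c t * (δ / c (v (i + 1))) := by
          apply Finset.sum_le_sum
          intro t ht
          have htA : t ∉ A := (Finset.mem_sdiff.mp ht).2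
          have hg := hgreedy i hi t htA
          have hct : 0 < c t := (hc t).1
          rw [div_le_div_iff₀ hct hci] at hg
          have hg' : (f (insert t A) - f A) * c (v (i + 1)) ≤ δ * c t := by
            rw [hδ]; linarith
          rw [mul_comm, div_mul_eq_mul_div, le_div_iff₀ hci]
          exact hg'
        have h4 : ∑ t ∈ T \ A, c t * (δ / c (v (i + 1))) =
            (∑ t ∈ T \ A, c t) * (δ / c (v (i + 1))) := by
          rw [Finset.sum_mul]
        have h5 : (∑ t ∈ T \ A, c t) ≤ B := by
          refine le_trans ?_ hT
          apply Finset.sum_le_sum_of_subset_of_nonneg (Finset.sdiff_subset)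
          intro t _ _; exact le_of_lt (hc t).1
        have h6 : 0 ≤ δ / c (v (i + 1)) := div_nonneg hδ0 (le_of_lt hci)
        have h7 : (∑ t ∈ T \ A, c t) * (δ / c (v (i + 1))) ≤ B * (δ / c (v (i + 1))) :=
          mul_le_mul_of_nonneg_right h5 h6
        linarith
      -- recurrence: f T - f (S (i+1)) ≤ (1 - c(v(i+1))/B) * (f T - f A)
      have hSi1 : f (S (i + 1)) = f A + δ := by
        rw [hSsucc i hi, hδ]; ring
      have hrec : f T - f (S (i + 1)) ≤ (1 - c (v (i + 1)) / B) * (f T - f A) := by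
        rw [hSi1]
        have hmul := mul_le_mul_of_nonneg_left hstep (le_of_lt (div_pos hci hB))
        have heq : (c (v (i + 1)) / B) * (B * (δ / c (v (i + 1)))) = δ := by
          field_simp
        rw [heq] at hmul
        nlinarith
      have hfac0 : 0 ≤ 1 - c (v (i + 1)) / B := by
        have : c (v (i + 1)) / B ≤ 1 := (div_le_one hB).mpr hciB
        linarith
      have hprod : ∏ j ∈ Finset.Icc 1 (i + 1), (1 - c (v j) / B) =
          (∏ j ∈ Finset.Icc 1 i, (1 - c (v j) / B)) * (1 - c (v (i + 1)) / B) := by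
        rw [Finset.prod_Icc_succ_top (Nat.le_add_left 1 i)]
      calc f T - f (S (i + 1)) ≤ (1 - c (v (i + 1)) / B) * (f T - f A) := hrec
        _ ≤ (1 - c (v (i + 1)) / B) * (f T * ∏ j ∈ Finset.Icc 1 i, (1 - c (v j) / B)) :=
            mul_le_mul_of_nonneg_left ihh hfac0
        _ = f T * ∏ j ∈ Finset.Icc 1 (i + 1), (1 - c (v j) / B) := by
            rw [hprod]; ring
  have hkeyl := key l le_rfl
  -- bound the product by exp(-1)
  have hprodle : ∏ j ∈ Finset.Icc 1 l, (1 - c (v j) / B) ≤ Real.exp (-1) := by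
    have h1 : ∏ j ∈ Finset.Icc 1 l, (1 - c (v j) / B) ≤
        ∏ j ∈ Finset.Icc 1 l, Real.exp (-(c (v j) / B)) := by
      apply Finset.prod_le_prod
      · intro j _
        have : c (v j) / B ≤ 1 := (div_le_one hB).mpr (hc (v j)).2
        linarith
      · intro j _
        have := Real.add_one_le_exp (-(c (v j) / B))
        linarith
    have h2 : ∏ j ∈ Finset.Icc 1 l, Real.exp (-(c (v j) / B)) =
        Real.exp (∑ j ∈ Finset.Icc 1 l, -(c (v j) / B)) := by
      rw [Real.exp_sum]
    have h3 : ∑ j ∈ Finset.Icc 1 l, -(c (v j) / B) ≤ -1 := by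
      have h1' : (1 : ℝ) ≤ ∑ j ∈ Finset.Icc 1 l, c (v j) / B := by
        rw [← Finset.sum_div, le_div_iff₀ hB]; linarith
      rw [Finset.sum_neg_distrib]
      linarith
    calc ∏ j ∈ Finset.Icc 1 l, (1 - c (v j) / B)
        ≤ Real.exp (∑ j ∈ Finset.Icc 1 l, -(c (v j) / B)) := by rw [← h2]; exact h1
      _ ≤ Real.exp (-1) := Real.exp_le_exp.mpr h3
  have hfinal : f T - f (S l) ≤ f T * Real.exp (-1) :=
    le_trans hkeyl (mul_le_mul_of_nonneg_left hprodle hfT0)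
  have hexp : Real.exp (-1) = 1 / Real.exp 1 := by
    rw [Real.exp_neg]; ring
  rw [hexp] at hfinal
  linarith [hfinal]
end

section
/- (Lemma 4, core) Let V be a finite type, f : Finset V → ℝ a monotone and submodular set function with f(∅) = 0, c : V → ℝ with 0 < c(v) ≤ B for all v, and B > 0 a budget. Let v_1, …, v_l be distinct elements of V, set S_0 = ∅ and S_i = {v_1, …, v_i}, and suppose that for each 0 ≤ i < l the element v_{i+1} maximizes (f(S_i ∪ {v}) − f(S_i))/c(v) over all v ∈ V \ S_i. If in addition Σ_{i=1}^{l} c(v_i) ≥ B/2, then for every T ⊆ V with Σ_{t ∈ T} c(t) ≤ B: f(S_l) ≥ (1 − 1/√e) · f(T). -/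
/-!
Let `gᵢ = f T − f Sᵢ`. By monotonicity and submodularity `gᵢ` is at most the sum of the
marginal gains of the elements of `T`, each of which is at most `c t · ρᵢ`, where `ρᵢ` is the
best gain per unit cost; so `gᵢ ≤ B ρᵢ`, and the greedy step gains `c vᵢ₊₁ · ρᵢ`, whence
`gᵢ₊₁ ≤ (1 − c vᵢ₊₁ / B) gᵢ`. Iterating with `1 − x ≤ e^{−x}` gives
`g_l ≤ e^{−∑ c vᵢ / B} f T ≤ e^{−1/2} f T`.
-/

open Finset Real

section SetFunction

variable {V : Type*} [DecidableEq V]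

lemma sub_le_sum_marginal_of_submodular (f : Finset V → ℝ)
    (hsub : ∀ A B : Finset V, A ⊆ B → ∀ v ∉ B,
      f (insert v A) - f A ≥ f (insert v B) - f B)
    (A T : Finset V) :
    f (A ∪ T) - f A ≤ ∑ t ∈ T \ A, (f (insert t A) - f A) := by
  induction T using Finset.induction_on with
  | empty => simp
  | @insert a s ha ih =>
    by_cases haA : a ∈ A
    · rwa [union_insert, insert_eq_self.2 (mem_union_left s haA),
        insert_sdiff_of_mem s haA]
    · have ha' : a ∉ s \ A := fun h => ha (mem_sdiff.1 h).1
      have haAs : a ∉ A ∪ s := by simp [ha, haA]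
      rw [union_insert, insert_sdiff_of_notMem s haA, sum_insert ha']
      linarith [hsub A (A ∪ s) subset_union_left a haAs]

lemma sub_le_cost_mul_of_marginal_le (f : Finset V → ℝ)
    (hmono : ∀ A B : Finset V, A ⊆ B → f A ≤ f B)
    (hsub : ∀ A B : Finset V, A ⊆ B → ∀ v ∉ B,
      f (insert v A) - f A ≥ f (insert v B) - f B)
    (c : V → ℝ) (hc : ∀ v, 0 ≤ c v) {A : Finset V} {ρ : ℝ} (hρ : 0 ≤ ρ)
    (hgain : ∀ t ∉ A, f (insert t A) - f A ≤ c t * ρ) (T : Finset V) :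
    f T - f A ≤ (∑ t ∈ T, c t) * ρ :=
  calc f T - f A ≤ f (A ∪ T) - f A := by linarith [hmono T (A ∪ T) subset_union_right]
    _ ≤ ∑ t ∈ T \ A, (f (insert t A) - f A) := sub_le_sum_marginal_of_submodular f hsub A T
    _ ≤ ∑ t ∈ T \ A, c t * ρ := sum_le_sum fun t ht => hgain t (mem_sdiff.1 ht).2
    _ = (∑ t ∈ T \ A, c t) * ρ := (sum_mul ..).symm
    _ ≤ (∑ t ∈ T, c t) * ρ :=
      mul_le_mul_of_nonneg_right (sum_le_sum_of_subset_of_nonneg sdiff_subset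
        fun t _ _ => hc t) hρ

lemma sub_insert_le_of_greedy (f : Finset V → ℝ)
    (hmono : ∀ A B : Finset V, A ⊆ B → f A ≤ f B)
    (hsub : ∀ A B : Finset V, A ⊆ B → ∀ v ∉ B,
      f (insert v A) - f A ≥ f (insert v B) - f B)
    {B : ℝ} (hB : 0 < B) (c : V → ℝ) (hc : ∀ v, 0 < c v) {A : Finset V} {u : V}
    (hgreedy : ∀ t ∉ A, (f (insert t A) - f A) / c t ≤ (f (insert u A) - f A) / c u)
    {T : Finset V} (hT : ∑ t ∈ T, c t ≤ B) :
    f T - f (insert u A) ≤ (1 - c u / B) * (f T - f A) := by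
  set ρ := (f (insert u A) - f A) / c u
  have hρ : 0 ≤ ρ := div_nonneg (by linarith [hmono A _ (subset_insert u A)]) (hc u).le
  have hgain : ∀ t ∉ A, f (insert t A) - f A ≤ c t * ρ := fun t ht =>
    (div_le_iff₀' (hc t)).1 (hgreedy t ht)
  have hgap : f T - f A ≤ B * ρ :=
    (sub_le_cost_mul_of_marginal_le f hmono hsub c (fun v => (hc v).le) hρ hgain T).trans
      (mul_le_mul_of_nonneg_right hT hρ)
  have hstep : f (insert u A) - f A = c u * ρ := (mul_div_cancel₀ _ (hc u).ne').symm
  have hscaled : c u / B * (f T - f A) ≤ c u * ρ := by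
    rw [div_mul_eq_mul_div, div_le_iff₀ hB]
    linarith [mul_le_mul_of_nonneg_left hgap (hc u).le]
  linarith

end SetFunction

lemma le_exp_neg_sum_mul_of_le_one_sub_mul {g x : ℕ → ℝ} {a : ℝ} {n : ℕ}
    (ha : 0 ≤ a) (h0 : g 0 ≤ a) (hx : ∀ i < n, x (i + 1) ≤ 1)
    (hstep : ∀ i < n, g (i + 1) ≤ (1 - x (i + 1)) * g i) :
    g n ≤ exp (-∑ i ∈ Icc 1 n, x i) * a := by
  induction n with
  | zero => simpa using h0
  | succ n ih =>
    have hprev := ih (fun i hi => hx i (by omega)) (fun i hi => hstep i (by omega))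
    have hbound : 0 ≤ exp (-∑ i ∈ Icc 1 n, x i) * a := by positivity
    calc g (n + 1) ≤ (1 - x (n + 1)) * g n := hstep n n.lt_succ_self
      _ ≤ (1 - x (n + 1)) * (exp (-∑ i ∈ Icc 1 n, x i) * a) :=
        mul_le_mul_of_nonneg_left hprev (by linarith [hx n n.lt_succ_self])
      _ ≤ exp (-x (n + 1)) * (exp (-∑ i ∈ Icc 1 n, x i) * a) :=
        mul_le_mul_of_nonneg_right (by linarith [add_one_le_exp (-x (n + 1))]) hbound
      _ = exp (-∑ i ∈ Icc 1 (n + 1), x i) * a := by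
        rw [sum_Icc_succ_top (by omega), neg_add, exp_add]; ring

lemma one_div_sqrt_exp_one : 1 / √(exp 1) = exp (-(1 / 2)) := by
  rw [← exp_half, exp_neg, one_div]

theorem stmt13_general {V : Type*} [DecidableEq V]
    (f : Finset V → ℝ)
    (hmono : ∀ A B : Finset V, A ⊆ B → f A ≤ f B)
    (hsub : ∀ A B : Finset V, A ⊆ B → ∀ v ∉ B,
      f (insert v A) - f A ≥ f (insert v B) - f B)
    (hf0 : f ∅ = 0)
    (B : ℝ) (hB : 0 < B)
    (c : V → ℝ) (hc : ∀ v, 0 < c v ∧ c v ≤ B)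
    (l : ℕ) (v : ℕ → V)
    (S : ℕ → Finset V) (hS0 : S 0 = ∅)
    (hSsucc : ∀ i < l, S (i + 1) = insert (v (i + 1)) (S i))
    (hgreedy : ∀ i < l, ∀ u : V, u ∉ S i →
      (f (insert u (S i)) - f (S i)) / c u ≤
      (f (insert (v (i + 1)) (S i)) - f (S i)) / c (v (i + 1)))
    (hcost : B / 2 ≤ ∑ i ∈ Finset.Icc 1 l, c (v i)) :
    ∀ T : Finset V, (∑ t ∈ T, c t) ≤ B →
      f (S l) ≥ (1 - 1 / Real.sqrt (Real.exp 1)) * f T := by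
  intro T hT
  have hfT : 0 ≤ f T := hf0 ▸ hmono ∅ T (empty_subset T)
  have hgap : f T - f (S l) ≤ exp (-∑ i ∈ Icc 1 l, c (v i) / B) * f T :=
    le_exp_neg_sum_mul_of_le_one_sub_mul (g := fun i => f T - f (S i)) hfT
      (by simp [hS0, hf0]) (fun i _ => (div_le_one hB).2 (hc _).2)
      fun i hi => hSsucc i hi ▸
        sub_insert_le_of_greedy f hmono hsub hB c (fun v => (hc v).1) (hgreedy i hi) hT
  have hexp : exp (-∑ i ∈ Icc 1 l, c (v i) / B) ≤ exp (-(1 / 2)) := by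
    rw [exp_le_exp, neg_le_neg_iff, ← sum_div, le_div_iff₀ hB]
    linarith
  rw [ge_iff_le, one_div_sqrt_exp_one]
  linarith [mul_le_mul_of_nonneg_right hexp hfT]

/-- Lemma 4, core: the cost-effective greedy chain whose
cumulative cost reaches at least half the budget `B` achieves a `(1 − 1/√e)`
fraction of the value of any budget-feasible set `T`. -/
theorem stmt13 {V : Type*} [Fintype V] [DecidableEq V]
    (f : Finset V → ℝ)
    (hmono : ∀ A B : Finset V, A ⊆ B → f A ≤ f B)
    (hsub : ∀ A B : Finset V, A ⊆ B → ∀ v ∉ B,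
      f (insert v A) - f A ≥ f (insert v B) - f B)
    (hf0 : f ∅ = 0)
    (B : ℝ) (hB : 0 < B)
    (c : V → ℝ) (hc : ∀ v, 0 < c v ∧ c v ≤ B)
    (l : ℕ) (v : ℕ → V)
    (hdist : Set.InjOn v (Set.Icc 1 l))
    (S : ℕ → Finset V) (hS0 : S 0 = ∅)
    (hSsucc : ∀ i < l, S (i + 1) = insert (v (i + 1)) (S i))
    (hnotmem : ∀ i < l, v (i + 1) ∉ S i)
    (hgreedy : ∀ i < l, ∀ u : V, u ∉ S i →
      (f (insert u (S i)) - f (S i)) / c u ≤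
      (f (insert (v (i + 1)) (S i)) - f (S i)) / c (v (i + 1)))
    (hcost : B / 2 ≤ ∑ i ∈ Finset.Icc 1 l, c (v i)) :
    ∀ T : Finset V, (∑ t ∈ T, c t) ≤ B →
      f (S l) ≥ (1 - 1 / Real.sqrt (Real.exp 1)) * f T :=
  stmt13_general f hmono hsub hf0 B hB c hc l v S hS0 hSsucc hgreedy hcost
end

section
/- (Upper confidence bound, Eqn. 31) Let X_1, …, X_θ (θ ≥ 1) be independent, identically distributed random variables on a probability space, each taking values in [0,1], with common mean μ ≥ 0. Let δ ∈ (0,1) and η = ln(1/δ). Then with probability at least 1 − δ: μ ≤ (√(Σ_{i=1}^{θ} X_i + η/2) + √(η/2))² / θ. -/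
/-!
Apply the multiplicative Chernoff lower-tail bound
`ℙ[S ≤ (1 - ξ) m] ≤ exp (-ξ² m / 2)` for `S = ∑ X_i`, `m = θ μ`, with `ξ` chosen so that
`ξ² m / 2 = η`. Outside the bad event, `m - √(2 η m) ≤ S`, i.e. `(√m - √(η/2))² ≤ S + η/2`,
and solving for `√m` gives the stated bound.
-/

open MeasureTheory ProbabilityTheory Real

lemma Real.exp_neg_le_one_sub_add_sq_div_two {x : ℝ} (hx : 0 ≤ x) :
    exp (-x) ≤ 1 - x + x ^ 2 / 2 := by
  -- `(1 - x + x²/2) (1 + x + x²/2) = 1 + x⁴/4 ≥ 1` and `1 + x + x²/2 ≤ exp x`.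
  have hquad := quadratic_le_exp_of_nonneg hx
  have hinv : exp (-x) * exp x = 1 := by rw [← exp_add, neg_add_cancel, exp_zero]
  nlinarith [sq_nonneg (x ^ 2), exp_pos (-x), exp_pos x]

lemma Real.exp_mul_le_one_add_mul {t y : ℝ} (hy : y ∈ Set.Icc (0 : ℝ) 1) :
    exp (t * y) ≤ 1 + (exp t - 1) * y := by
  have h := convexOn_exp.2 (Set.mem_univ 0) (Set.mem_univ t) (sub_nonneg.2 hy.2) hy.1
    (sub_add_cancel 1 y)
  simp only [smul_eq_mul, mul_zero, zero_add, exp_zero, mul_one] at h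
  rw [mul_comm t y]
  linarith

lemma le_sq_sqrt_add_add_sqrt {m s η : ℝ} (hm : 0 ≤ m) (hη : 0 ≤ η)
    (h : m - √(2 * η * m) ≤ s) : m ≤ (√(s + η / 2) + √(η / 2)) ^ 2 := by
  have hsplit : √(2 * η * m) = 2 * (√m * √(η / 2)) := by
    rw [← sqrt_mul hm, show 2 * η * m = 2 ^ 2 * (m * (η / 2)) by ring,
      sqrt_mul (by norm_num), sqrt_sq (by norm_num)]
  have hsq : (√m - √(η / 2)) ^ 2 ≤ s + η / 2 := by
    nlinarith [sq_sqrt hm, sq_sqrt (by positivity : 0 ≤ η / 2)]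
  have hroot : √m ≤ √(s + η / 2) + √(η / 2) := by
    linarith [le_abs_self (√m - √(η / 2)), abs_le_sqrt hsq]
  calc m = √m ^ 2 := (sq_sqrt hm).symm
    _ ≤ (√(s + η / 2) + √(η / 2)) ^ 2 := pow_le_pow_left₀ (sqrt_nonneg m) hroot 2

namespace ProbabilityTheory

variable {Ω : Type*} [MeasurableSpace Ω] {P : Measure Ω} [IsProbabilityMeasure P]

lemma mgf_le_exp_integral_mul_exp_sub_one {Y : Ω → ℝ} (hY : Measurable Y)
    (hb : ∀ ω, Y ω ∈ Set.Icc (0 : ℝ) 1) (t : ℝ) :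
    mgf Y P t ≤ exp ((∫ ω, Y ω ∂P) * (exp t - 1)) := by
  have hYint : Integrable Y P := .of_mem_Icc 0 1 hY.aemeasurable (ae_of_all _ hb)
  calc mgf Y P t = ∫ ω, exp (t * Y ω) ∂P := rfl
    _ ≤ ∫ ω, (1 + (exp t - 1) * Y ω) ∂P :=
        integral_mono (integrable_exp_mul_of_mem_Icc hY.aemeasurable (ae_of_all _ hb))
          ((integrable_const 1).add (hYint.const_mul _)) fun ω => exp_mul_le_one_add_mul (hb ω)
    _ = 1 + (∫ ω, Y ω ∂P) * (exp t - 1) := by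
        rw [integral_add (integrable_const 1) (hYint.const_mul _), integral_const_mul]
        simp [mul_comm]
    _ ≤ exp ((∫ ω, Y ω ∂P) * (exp t - 1)) := by
        linarith [add_one_le_exp ((∫ ω, Y ω ∂P) * (exp t - 1))]

lemma ofReal_one_sub_le_of_measure_compl_le {s : Set Ω} {δ : ℝ} (hδ : 0 ≤ δ)
    (h : P sᶜ ≤ ENNReal.ofReal δ) : ENNReal.ofReal (1 - δ) ≤ P s := by
  have hcover : 1 ≤ P s + P sᶜ := by
    simpa [Set.union_compl_self] using measure_union_le (μ := P) s sᶜ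
  calc ENNReal.ofReal (1 - δ) = 1 - ENNReal.ofReal δ := by
        rw [ENNReal.ofReal_sub _ hδ, ENNReal.ofReal_one]
    _ ≤ 1 - P sᶜ := tsub_le_tsub_left h 1
    _ ≤ P s := tsub_le_iff_right.2 hcover

variable {ι : Type*} [Fintype ι] {X : ι → Ω → ℝ}

lemma iIndepFun.mgf_sum_le_exp_sum_integral_mul (hindep : iIndepFun X P)
    (hmeas : ∀ i, Measurable (X i)) (hb : ∀ i ω, X i ω ∈ Set.Icc (0 : ℝ) 1) (t : ℝ) :
    mgf (∑ i, X i) P t ≤ exp ((∑ i, ∫ ω, X i ω ∂P) * (exp t - 1)) := by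
  rw [hindep.mgf_sum hmeas, Finset.sum_mul, exp_sum]
  exact Finset.prod_le_prod (fun i _ => mgf_nonneg)
    fun i _ => mgf_le_exp_integral_mul_exp_sub_one (hmeas i) (hb i) t

/-- Multiplicative Chernoff bound for the lower tail. -/
theorem iIndepFun.measureReal_sum_le_one_sub_mul_le (hindep : iIndepFun X P)
    (hmeas : ∀ i, Measurable (X i)) (hb : ∀ i ω, X i ω ∈ Set.Icc (0 : ℝ) 1)
    {ξ : ℝ} (hξ : 0 ≤ ξ) :
    P.real {ω | ∑ i, X i ω ≤ (1 - ξ) * ∑ i, ∫ ω, X i ω ∂P} ≤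
      exp (-(ξ ^ 2 * ∑ i, ∫ ω, X i ω ∂P) / 2) := by
  set m := ∑ i, ∫ ω, X i ω ∂P
  have hm : 0 ≤ m := Finset.sum_nonneg fun i _ => integral_nonneg fun ω => (hb i ω).1
  have hS : ∀ ω, (∑ i, X i) ω = ∑ i, X i ω := fun ω => Finset.sum_apply ω _ _
  have hint : Integrable (fun ω => exp (-ξ * (∑ i, X i) ω)) P :=
    integrable_exp_mul_of_mem_Icc (a := 0) (b := Fintype.card ι)
      (Finset.aemeasurable_sum _ fun i _ => (hmeas i).aemeasurable) <| ae_of_all _ fun ω => by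
        rw [hS]
        refine ⟨Finset.sum_nonneg fun i _ => (hb i ω).1, ?_⟩
        simpa using Finset.sum_le_sum fun i (_ : i ∈ Finset.univ) => (hb i ω).2
  have hexp : m * (exp (-ξ) - 1) ≤ m * (-ξ + ξ ^ 2 / 2) := by
    have := exp_neg_le_one_sub_add_sq_div_two hξ
    gcongr
    linarith
  calc P.real {ω | ∑ i, X i ω ≤ (1 - ξ) * m}
      = P.real {ω | (∑ i, X i) ω ≤ (1 - ξ) * m} := by simp only [hS]
    _ ≤ exp (-(-ξ) * ((1 - ξ) * m)) * mgf (∑ i, X i) P (-ξ) :=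
        measure_le_le_exp_mul_mgf _ (neg_nonpos.2 hξ) hint
    _ ≤ exp (-(-ξ) * ((1 - ξ) * m)) * exp (m * (exp (-ξ) - 1)) := by
        gcongr
        exact hindep.mgf_sum_le_exp_sum_integral_mul hmeas hb _
    _ ≤ exp (-(ξ ^ 2 * m) / 2) := by
        rw [← exp_add, exp_le_exp]
        linarith

lemma iIndepFun.measure_sum_lt_sub_sqrt_le (hindep : iIndepFun X P)
    (hmeas : ∀ i, Measurable (X i)) (hb : ∀ i ω, X i ω ∈ Set.Icc (0 : ℝ) 1)
    {η : ℝ} (hη : 0 ≤ η) :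
    P {ω | ∑ i, X i ω < (∑ i, ∫ ω, X i ω ∂P) - √(2 * η * ∑ i, ∫ ω, X i ω ∂P)} ≤
      ENNReal.ofReal (exp (-η)) := by
  set m := ∑ i, ∫ ω, X i ω ∂P
  have hm : 0 ≤ m := Finset.sum_nonneg fun i _ => integral_nonneg fun ω => (hb i ω).1
  rcases hm.eq_or_lt with hm0 | hmpos
  · have hempty : {ω | ∑ i, X i ω < m - √(2 * η * m)} = ∅ := by
      refine Set.eq_empty_of_forall_notMem fun ω hω => ?_
      rw [← hm0, mul_zero, sqrt_zero, sub_zero, Set.mem_ofPred_eq] at hω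
      exact hω.not_ge (Finset.sum_nonneg fun i _ => (hb i ω).1)
    simp [hempty]
  set ξ := √(2 * η / m)
  have hξsq : ξ ^ 2 * m = 2 * η := by
    rw [sq_sqrt (by positivity), div_mul_cancel₀ _ hmpos.ne']
  have hξm : (1 - ξ) * m = m - √(2 * η * m) := by
    rw [← hξsq, show ξ ^ 2 * m * m = (ξ * m) ^ 2 by ring, sqrt_sq (by positivity)]
    ring
  rw [← ofReal_measureReal]
  refine ENNReal.ofReal_le_ofReal ?_
  calc P.real {ω | ∑ i, X i ω < m - √(2 * η * m)}
      ≤ P.real {ω | ∑ i, X i ω ≤ (1 - ξ) * m} :=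
        measureReal_mono fun ω (hω : ∑ i, X i ω < m - √(2 * η * m)) =>
          show ∑ i, X i ω ≤ (1 - ξ) * m by linarith
    _ ≤ exp (-(ξ ^ 2 * m) / 2) :=
        hindep.measureReal_sum_le_one_sub_mul_le hmeas hb (sqrt_nonneg _)
    _ = exp (-η) := by rw [hξsq]; ring_nf

end ProbabilityTheory
theorem stmt16_general {Ω : Type*} [MeasureSpace Ω] [IsProbabilityMeasure (ℙ : Measure Ω)]
    (θ : ℕ) (hθ : 1 ≤ θ) (X : Fin θ → Ω → ℝ)
    (hmeas : ∀ i, Measurable (X i))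
    (hindep : iIndepFun X ℙ)
    (hbound : ∀ i, ∀ ω, X i ω ∈ Set.Icc (0 : ℝ) 1)
    (μ : ℝ) (hμ : 0 ≤ μ) (hmean : ∀ i, ∫ ω, X i ω ∂ℙ = μ)
    (δ : ℝ) (hδ0 : 0 < δ) (hδ1 : δ < 1)
    (η : ℝ) (hη : η = Real.log (1 / δ)) :
    ENNReal.ofReal (1 - δ) ≤
      ℙ {ω | μ ≤ (Real.sqrt ((∑ i : Fin θ, X i ω) + η / 2) +
                Real.sqrt (η / 2)) ^ 2 / θ} := by
  have hθpos : (0 : ℝ) < θ := by exact_mod_cast hθ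
  have hη0 : 0 ≤ η := hη ▸ log_nonneg (one_le_one_div hδ0 hδ1.le)
  have hsum : ∑ i, ∫ ω, X i ω ∂ℙ = θ * μ := by simp [hmean]
  have hδ : exp (-η) = δ := by rw [hη, one_div, log_inv, neg_neg, exp_log hδ0]
  have hbad := hindep.measure_sum_lt_sub_sqrt_le hmeas hbound hη0
  rw [hsum, hδ] at hbad
  refine ofReal_one_sub_le_of_measure_compl_le hδ0.le (le_trans (measure_mono fun ω hω => ?_) hbad)
  by_contra hgood
  rw [Set.mem_ofPred_eq, not_lt] at hgood
  refine hω ((le_div_iff₀ hθpos).2 ?_)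
  rw [mul_comm]
  exact le_sq_sqrt_add_add_sqrt (by positivity) hη0 hgood

/-- upper confidence bound, Eqn. 31: for i.i.d. `[0,1]`-valued
random variables with mean `μ ≥ 0`, with probability at least `1 − δ`,
`μ ≤ (√(Σ X_i + η/2) + √(η/2))²/θ` where `η = ln(1/δ)`. -/
theorem stmt16 {Ω : Type*} [MeasureSpace Ω] [IsProbabilityMeasure (ℙ : Measure Ω)]
    (θ : ℕ) (hθ : 1 ≤ θ) (X : Fin θ → Ω → ℝ)
    (hmeas : ∀ i, Measurable (X i))
    (hindep : iIndepFun X ℙ)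
    (hident : ∀ i j, IdentDistrib (X i) (X j) ℙ ℙ)
    (hbound : ∀ i, ∀ ω, X i ω ∈ Set.Icc (0 : ℝ) 1)
    (μ : ℝ) (hμ : 0 ≤ μ) (hmean : ∀ i, ∫ ω, X i ω ∂ℙ = μ)
    (δ : ℝ) (hδ0 : 0 < δ) (hδ1 : δ < 1)
    (η : ℝ) (hη : η = Real.log (1 / δ)) :
    ENNReal.ofReal (1 - δ) ≤
      ℙ {ω | μ ≤ (Real.sqrt ((∑ i : Fin θ, X i ω) + η / 2) +
                Real.sqrt (η / 2)) ^ 2 / θ} :=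
  stmt16_general θ hθ X hmeas hindep hbound μ hμ hmean δ hδ0 hδ1 η hη
end

section
/- (Cardinality greedy, Eqns. 25–26) Let V be a finite type and f : Finset V → ℝ a monotone and submodular set function with f(∅) = 0. Let k ≥ 1, let v_1, …, v_k be distinct elements of V, set S_0 = ∅ and S_i = {v_1, …, v_i}, and suppose that for each 0 ≤ i < k the element v_{i+1} maximizes f(S_i ∪ {v}) − f(S_i) over all v ∈ V \ S_i. Then for every T ⊆ V with |T| ≤ k: f(S_k) ≥ (1 − 1/e) · f(T). -/
/-- cardinality greedy, Eqns. 25–26: the hill-climbing greedy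
chain `S_0 = ∅`, `S_i = {v_1, …, v_i}`, where each `v_{i+1}` maximizes the
marginal gain over `V \ S_i`, satisfies `f (S_k) ≥ (1 − 1/e) · f T` for every
`T` with `|T| ≤ k`. -/
theorem stmt17 {V : Type*} [Fintype V] [DecidableEq V]
    (f : Finset V → ℝ)
    (hmono : ∀ A B : Finset V, A ⊆ B → f A ≤ f B)
    (hsub : ∀ A B : Finset V, A ⊆ B → ∀ v ∉ B,
      f (insert v A) - f A ≥ f (insert v B) - f B)
    (hf0 : f ∅ = 0)
    (k : ℕ) (hk : 1 ≤ k) (v : ℕ → V)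
    (hdist : Set.InjOn v (Set.Icc 1 k))
    (S : ℕ → Finset V) (hS0 : S 0 = ∅)
    (hSsucc : ∀ i < k, S (i + 1) = insert (v (i + 1)) (S i))
    (hnotmem : ∀ i < k, v (i + 1) ∉ S i)
    (hgreedy : ∀ i < k, ∀ u : V, u ∉ S i →
      f (insert u (S i)) - f (S i) ≤
      f (insert (v (i + 1)) (S i)) - f (S i)) :
    ∀ T : Finset V, T.card ≤ k →
      f (S k) ≥ (1 - 1 / Real.exp 1) * f T := by
  intro T hT
  have hkpos : (0 : ℝ) < k := by exact_mod_cast hk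
  have hTnn : 0 ≤ f T := by rw [← hf0]; exact hmono _ _ (Finset.empty_subset T)
  -- submodular bound: f (A ∪ D) ≤ f A + ∑_{u ∈ D} marginal_A(u)
  have hsum : ∀ (D A : Finset V),
      f (A ∪ D) ≤ f A + ∑ u ∈ D, (f (insert u A) - f A) := by
    intro D
    induction D using Finset.induction_on with
    | empty => intro A; simp
    | @insert u D' hu ih =>
      intro A
      rw [Finset.sum_insert hu]
      rw [Finset.union_insert]
      by_cases hmem : u ∈ A ∪ D'
      · rw [Finset.insert_eq_self.2 hmem]
        have h2 := ih A
        have h3 : 0 ≤ f (insert u A) - f A := by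
          have := hmono A (insert u A) (Finset.subset_insert u A); linarith
        linarith
      · have h2 := hsub A (A ∪ D') Finset.subset_union_left u hmem
        have h3 := ih A
        linarith
  have hgain : ∀ i < k, 0 ≤ f (S (i + 1)) - f (S i) := by
    intro i hi
    rw [hSsucc i hi]
    have := hmono (S i) (insert (v (i + 1)) (S i)) (Finset.subset_insert _ _)
    linarith
  have key : ∀ i < k, f T - f (S i) ≤ (k : ℝ) * (f (S (i + 1)) - f (S i)) := by
    intro i hi
    have h1 : f T ≤ f (S i ∪ T) := hmono _ _ Finset.subset_union_right
    have h2 := hsum T (S i)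
    have hterm : ∀ u ∈ T,
        f (insert u (S i)) - f (S i) ≤ f (S (i + 1)) - f (S i) := by
      intro u _
      rw [hSsucc i hi]
      by_cases hmem : u ∈ S i
      · rw [Finset.insert_eq_self.2 hmem]
        have := hmono (S i) (insert (v (i + 1)) (S i)) (Finset.subset_insert _ _)
        linarith
      · exact hgreedy i hi u hmem
    have h3 : ∑ u ∈ T, (f (insert u (S i)) - f (S i)) ≤
        T.card • (f (S (i + 1)) - f (S i)) :=
      Finset.sum_le_card_nsmul T _ _ hterm
    rw [nsmul_eq_mul] at h3
    have h4 : (T.card : ℝ) * (f (S (i + 1)) - f (S i)) ≤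
        (k : ℝ) * (f (S (i + 1)) - f (S i)) := by
      apply mul_le_mul_of_nonneg_right _ (hgain i hi)
      exact_mod_cast hT
    linarith
  -- iterate the contraction
  have hrnn : 0 ≤ 1 - 1 / (k : ℝ) := by
    have : 1 / (k : ℝ) ≤ 1 := by
      rw [div_le_one hkpos]; exact_mod_cast hk
    linarith
  have hiter : ∀ i ≤ k, f T - f (S i) ≤ (1 - 1 / (k : ℝ)) ^ i * f T := by
    intro i
    induction i with
    | zero => intro _; simp [hS0, hf0]
    | succ i ih =>
      intro hik
      have hi : i < k := Nat.lt_of_succ_le hik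
      have h1 := key i hi
      have h2 := ih (le_of_lt hi)
      have h3 : f T - f (S (i + 1)) ≤ (1 - 1 / (k : ℝ)) * (f T - f (S i)) := by
        have h1' : (f T - f (S i)) / (k : ℝ) ≤ f (S (i + 1)) - f (S i) := by
          rw [div_le_iff₀ hkpos]
          linarith [h1]
        rw [sub_mul, one_mul, one_div_mul_eq_div]
        linarith
      calc f T - f (S (i + 1)) ≤ (1 - 1 / (k : ℝ)) * (f T - f (S i)) := h3
        _ ≤ (1 - 1 / (k : ℝ)) * ((1 - 1 / (k : ℝ)) ^ i * f T) :=
          mul_le_mul_of_nonneg_left h2 hrnn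
        _ = (1 - 1 / (k : ℝ)) ^ (i + 1) * f T := by ring
  have hfin := hiter k le_rfl
  -- bound (1 - 1/k)^k ≤ 1/e
  have hexp : (1 - 1 / (k : ℝ)) ^ k ≤ 1 / Real.exp 1 := by
    have h1 : 1 - 1 / (k : ℝ) ≤ Real.exp (-(1 / (k : ℝ))) := by
      have := Real.add_one_le_exp (-(1 / (k : ℝ)))
      linarith
    have h2 : (1 - 1 / (k : ℝ)) ^ k ≤ Real.exp (-(1 / (k : ℝ))) ^ k :=
      pow_le_pow_left₀ hrnn h1 k
    have h3 : Real.exp (-(1 / (k : ℝ))) ^ k = Real.exp (-1) := by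
      rw [← Real.exp_nat_mul]
      congr 1
      field_simp
    rw [h3, Real.exp_neg] at h2
    rw [inv_eq_one_div] at h2
    exact h2
  have h5 : (1 - 1 / (k : ℝ)) ^ k * f T ≤ (1 / Real.exp 1) * f T :=
    mul_le_mul_of_nonneg_right hexp hTnn
  nlinarith
end
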